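/- arXiv:hep-th/0202007 — 4 statements merged into one kernel-verified Lean document; each statement's English description precedes it below -/
import Mathlib

section
/- Let K be a field, let F_1, …, F_r be symmetric n×n matrices over K, and let γ, γ̃ ∈ K^r be two weight vectors such that both G = Σ_{M=1}^r γ_M F_M and G̃ = Σ_{M=1}^r γ̃_M F_M are invertible. If F_I · G^{-1} · F_J = F_J · G^{-1} · F_I holds for all I, J ∈ {1, …, r}, then also F_I · G̃^{-1} · F_J = F_J · G̃^{-1} · F_I holds for all I, J ∈ {1, …, r}. In other words, if the generalized WDVV equations hold for one set of weights with invertible combination, they hold for every set of weights whose combination is invertible. -/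
open Matrix

/-- If the symmetric matrices `F 1, …, F r` satisfy the generalized WDVV equations for one
set of weights `γ` with invertible combination `G`, then they satisfy them for any
other set of weights `γ̃` whose combination `G̃` is invertible. -/
theorem wdvv_weight_independence
    {K : Type*} [Field K] {n r : ℕ}
    (F : Fin r → Matrix (Fin n) (Fin n) K)
    (hsymm : ∀ I, (F I)ᵀ = F I)
    (γ γ' : Fin r → K)
    (G G' : Matrix (Fin n) (Fin n) K)
    (hG : G = ∑ M, γ M • F M)
    (hG' : G' = ∑ M, γ' M • F M)
    (hGinv : IsUnit G) (hG'inv : IsUnit G')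
    (hwdvv : ∀ I J, F I * G⁻¹ * F J = F J * G⁻¹ * F I) :
    ∀ I J, F I * G'⁻¹ * F J = F J * G'⁻¹ * F I := by
  intro I J
  have hGd : IsUnit G.det := (Matrix.isUnit_iff_isUnit_det G).mp hGinv
  have hG'd : IsUnit G'.det := (Matrix.isUnit_iff_isUnit_det G').mp hG'inv
  have hGi : G * G⁻¹ = 1 := Matrix.mul_nonsing_inv G hGd
  have hiG : G⁻¹ * G = 1 := Matrix.nonsing_inv_mul G hGd
  set A : Fin r → Matrix (Fin n) (Fin n) K := fun I => G⁻¹ * F I with hA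
  have hF : ∀ I, F I = G * A I := by
    intro I
    simp only [hA, ← mul_assoc, hGi, one_mul]
  have hcomm : ∀ I J, A I * A J = A J * A I := by
    intro I J
    have := congrArg (fun X => G⁻¹ * X) (hwdvv I J)
    simpa only [hA, mul_assoc] using this
  set B : Matrix (Fin n) (Fin n) K := G⁻¹ * G' with hB
  have hGB : G * B = G' := by
    simp only [hB, ← mul_assoc, hGi, one_mul]
  have hBsum : B = ∑ M, γ' M • A M := by
    simp only [hB, hG', Finset.mul_sum, Matrix.mul_smul, hA]
  have hBcomm : ∀ I, B * A I = A I * B := by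
    intro I
    rw [hBsum, Finset.sum_mul, Finset.mul_sum]
    refine Finset.sum_congr rfl fun M _ => ?_
    rw [smul_mul_assoc, mul_smul_comm, hcomm]
  have hBinv : IsUnit B := by
    rw [hB]
    exact (Matrix.isUnit_nonsing_inv_iff.mpr hGinv).mul hG'inv
  have hBd : IsUnit B.det := (Matrix.isUnit_iff_isUnit_det B).mp hBinv
  have hBi : B * B⁻¹ = 1 := Matrix.mul_nonsing_inv B hBd
  have hiB : B⁻¹ * B = 1 := Matrix.nonsing_inv_mul B hBd
  have hBicomm : ∀ I, B⁻¹ * A I = A I * B⁻¹ := by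
    intro I
    calc B⁻¹ * A I = B⁻¹ * A I * (B * B⁻¹) := by rw [hBi, mul_one]
    _ = B⁻¹ * (A I * B) * B⁻¹ := by simp only [mul_assoc]
    _ = B⁻¹ * (B * A I) * B⁻¹ := by rw [hBcomm]
    _ = A I * B⁻¹ := by rw [← mul_assoc, hiB, one_mul]
  have hG'i : G'⁻¹ = B⁻¹ * G⁻¹ := by
    rw [← hGB, Matrix.mul_inv_rev]
  have key : ∀ I J, F I * G'⁻¹ * F J = G * (B⁻¹ * (A I * A J)) := by
    intro I J
    rw [hG'i, hF I, hF J]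
    calc G * A I * (B⁻¹ * G⁻¹) * (G * A J)
        = G * (A I * B⁻¹) * (G⁻¹ * G * A J) := by simp only [mul_assoc]
      _ = G * (A I * B⁻¹) * A J := by rw [hiG, one_mul]
      _ = G * (B⁻¹ * A I) * A J := by rw [hBicomm]
      _ = G * (B⁻¹ * (A I * A J)) := by simp only [mul_assoc]
  rw [key I J, key J I, hcomm]
end

section
/- Let f : ℝ^r → ℝ^r be a continuously differentiable map whose Jacobian matrix is symmetric at every point, i.e. for all a ∈ ℝ^r and all I, J ∈ {1, …, r} the partial derivatives satisfy ∂f_I/∂a_J (a) = ∂f_J/∂a_I (a). Then f is a gradient: there exists a differentiable function F : ℝ^r → ℝ such that ∂F/∂a_I (a) = f_I(a) for all a ∈ ℝ^r and all I ∈ {1, …, r}. -/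
/-! The 1-form `ω a = ∑ₖ f a k • dxₖ` dual to `f` has derivative `dω a v w = ⟪Df(a) v, w⟫`,
which is symmetric in `v, w` exactly when the Jacobian of `f` is symmetric. So `ω` is closed,
and by the Poincaré lemma on the convex set `ℝ^r` it is exact, `ω = dF`; the partial
derivatives of `F` are then the components of `f`. -/

open ContinuousLinearMap

theorem ContinuousLinearMap.apply_comm_of_apply_single_comm {𝕜 ι : Type*}
    [NontriviallyNormedField 𝕜] [Fintype ι] [DecidableEq ι]
    (B : (ι → 𝕜) →L[𝕜] (ι → 𝕜) →L[𝕜] 𝕜)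
    (hB : ∀ i j, B (Pi.single i 1) (Pi.single j 1) = B (Pi.single j 1) (Pi.single i 1))
    (v w : ι → 𝕜) : B v w = B w v :=
  ((LinearMap.BilinForm.isSymm_iff_basis (B := B.toLinearMap₁₂) (Pi.basisFun 𝕜 ι)).2
    (by simpa using hB)).eq v w

theorem hasFDerivAt_sum_smul_proj {E ι : Type*} [NormedAddCommGroup E] [NormedSpace ℝ E]
    [Fintype ι] {g : E → ι → ℝ} {g' : ι → E →L[ℝ] ℝ} {x : E}
    (hg : ∀ k, HasFDerivAt (g · k) (g' k) x) :
    HasFDerivAt (fun y => ∑ k, g y k • (proj k : (ι → ℝ) →L[ℝ] ℝ))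
      (∑ k, (g' k).smulRight (proj k : (ι → ℝ) →L[ℝ] ℝ)) x :=
  HasFDerivAt.fun_sum fun k _ => (hg k).smul_const (proj k : (ι → ℝ) →L[ℝ] ℝ)

/-- A continuously differentiable map `f : ℝ^r → ℝ^r` whose Jacobian matrix is symmetric
at every point is a gradient: there is a differentiable `F : ℝ^r → ℝ` whose partial
derivatives are the components of `f`. -/
theorem symmetric_jacobian_is_gradient
    {r : ℕ} (f : (Fin r → ℝ) → (Fin r → ℝ))
    (hf : ContDiff ℝ 1 f)
    (hsymm : ∀ (a : Fin r → ℝ) (I J : Fin r),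
      fderiv ℝ (fun x => f x I) a (Pi.single J 1) =
        fderiv ℝ (fun x => f x J) a (Pi.single I 1)) :
    ∃ F : (Fin r → ℝ) → ℝ, Differentiable ℝ F ∧
      ∀ (a : Fin r → ℝ) (I : Fin r), fderiv ℝ F a (Pi.single I 1) = f a I := by
  set ω : (Fin r → ℝ) → (Fin r → ℝ) →L[ℝ] ℝ := fun a => ∑ k, f a k • proj k
  have hdω : ∀ a, HasFDerivAt ω
      (∑ k, (fderiv ℝ (f · k) a).smulRight (proj k : (Fin r → ℝ) →L[ℝ] ℝ)) a := fun a =>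
    hasFDerivAt_sum_smul_proj fun k =>
      (differentiableAt_pi.1 (hf.differentiable one_ne_zero a) k).hasFDerivAt
  have hω_closed : ∀ a v w, fderiv ℝ ω a v w = fderiv ℝ ω a w v := by
    intro a
    rw [(hdω a).fderiv]
    exact apply_comm_of_apply_single_comm _ fun i j => by simpa [Pi.single_apply] using hsymm a j i
  obtain ⟨F, hF⟩ := convex_univ.exists_forall_hasFDerivAt_of_fderiv_symmetric isOpen_univ
    (fun a _ => (hdω a).differentiableAt.differentiableWithinAt) fun a _ => hω_closed a
  refine ⟨F, fun a => (hF a trivial).differentiableAt, fun a I => ?_⟩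
  simp [(hF a trivial).fderiv, ω, Pi.single_apply]
end

section
/- Let K be a field, let F_1, …, F_r be symmetric r×r matrices over K, let γ ∈ K^r, and suppose G = Σ_{M=1}^r γ_M F_M is invertible and the generalized WDVV equations F_I·G^{-1}·F_J = F_J·G^{-1}·F_I hold for all I, J. Let H be an invertible symmetric r×r matrix over K, and define F̃_I = − Σ_{P=1}^r (H^{-1})_{IP} · (H^{-1}·F_P·H^{-1}) for I = 1, …, r. Then each F̃_I is symmetric, and with weights γ̃ = −H·γ the matrix G̃ = Σ_{M=1}^r γ̃_M F̃_M = H^{-1}·G·H^{-1} is invertible and the generalized WDVV equations F̃_I·G̃^{-1}·F̃_J = F̃_J·G̃^{-1}·F̃_I hold for all I, J. (This is the algebraic form of the covariance of the generalized WDVV equations under the S-duality transformation, where H plays the role of the Hessian.) -/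
open Matrix

/-! The S-duality transformation is the composite of two operations that each preserve the
WDVV equations. The congruence `F_P ↦ H⁻¹ F_P H⁻¹` sends `G` to `H⁻¹ G H⁻¹` and hence each
product `F_I G⁻¹ F_J` to `H⁻¹ F_I G⁻¹ F_J H⁻¹`. The recombination `F_I ↦ ∑_P C_IP F_P` with
`C = -H⁻¹` preserves the relations by bilinearity, and since `H` is symmetric the weights
`γ̃ = -Hγ` satisfy `γ̃ᵀ C = γᵀ`, so it does not change the metric. -/

namespace Matrix

variable {ι κ n K : Type*} [Fintype ι] [Fintype n] [CommRing K]

theorem IsSymm.mul_mul_self {A B : Matrix n n K} (hA : A.IsSymm) (hB : B.IsSymm) :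
    (A * B * A).IsSymm := by
  rw [IsSymm, transpose_mul, transpose_mul, hA.eq, hB.eq, mul_assoc]

omit [Fintype ι] [Fintype n] in
theorem isSymm_sum {s : Finset ι} {A : ι → Matrix n n K} (h : ∀ i ∈ s, (A i).IsSymm) :
    (∑ i ∈ s, A i).IsSymm :=
  Finset.sum_induction _ IsSymm (fun _ _ => IsSymm.add) isSymm_zero h

omit [Fintype n] in
theorem sum_smul_sum_smul [Fintype κ] (γ : κ → K) (C : Matrix κ ι K) (F : ι → Matrix n n K) :
    ∑ M, γ M • ∑ P, C M P • F P = ∑ P, (γ ᵥ* C) P • F P := by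
  simp only [Finset.smul_sum, smul_smul, vecMul, dotProduct, Finset.sum_smul]
  exact Finset.sum_comm

theorem sum_smul_mul_sum_smul_comm {F : ι → Matrix n n K} {X : Matrix n n K}
    (h : ∀ I J, F I * X * F J = F J * X * F I) (c d : ι → K) :
    (∑ P, c P • F P) * X * (∑ Q, d Q • F Q) = (∑ Q, d Q • F Q) * X * (∑ P, c P • F P) := by
  simp only [Finset.sum_mul, Finset.mul_sum, smul_mul_assoc, mul_smul_comm, Finset.smul_sum,
    smul_smul]
  rw [Finset.sum_comm]
  refine Finset.sum_congr rfl fun Q _ => Finset.sum_congr rfl fun P _ => ?_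
  rw [h, mul_comm]

variable [DecidableEq n]

theorem mulVec_vecMul_inv_of_isSymm {H : Matrix n n K} (hH : H.IsSymm) (hdet : IsUnit H.det)
    (v : n → K) : (H *ᵥ v) ᵥ* H⁻¹ = v := by
  rw [← vecMul_transpose, hH.eq, vecMul_vecMul, mul_nonsing_inv _ hdet, vecMul_one]

theorem mul_mul_self_mul_inv_mul_mul_self {A : Matrix n n K} (hA : IsUnit A.det)
    (X G Y : Matrix n n K) :
    A * X * A * (A * G * A)⁻¹ * (A * Y * A) = A * (X * G⁻¹ * Y) * A := by
  simp only [mul_inv_rev, mul_assoc, mul_nonsing_inv_cancel_left _ _ hA,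
    nonsing_inv_mul_cancel_left _ _ hA]

end Matrix

/-- Algebraic covariance of the generalized WDVV equations under S-duality:
given symmetric `F I` satisfying the WDVV equations with weights `γ` and invertible
combination `G`, and an invertible symmetric matrix `H` (the Hessian), the matrices
`F̃ I = -∑ P, (H⁻¹) I P • (H⁻¹ * F P * H⁻¹)` are symmetric, the combination
`G̃ = ∑ M, γ̃ M • F̃ M` for `γ̃ = -H.mulVec γ` equals `H⁻¹ * G * H⁻¹`, is invertible,
and the WDVV equations hold for the `F̃ I`. -/
theorem wdvv_covariance_S_duality
    {K : Type*} [Field K] {r : ℕ}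
    (F : Fin r → Matrix (Fin r) (Fin r) K)
    (hsymm : ∀ I, (F I)ᵀ = F I)
    (γ : Fin r → K)
    (G : Matrix (Fin r) (Fin r) K)
    (hG : G = ∑ M, γ M • F M)
    (hGinv : IsUnit G)
    (hwdvv : ∀ I J, F I * G⁻¹ * F J = F J * G⁻¹ * F I)
    (H : Matrix (Fin r) (Fin r) K) (hHsymm : Hᵀ = H) (hHinv : IsUnit H)
    (Ft : Fin r → Matrix (Fin r) (Fin r) K)
    (hFt : ∀ I, Ft I = -∑ P, H⁻¹ I P • (H⁻¹ * F P * H⁻¹))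
    (γt : Fin r → K) (hγt : γt = -(H.mulVec γ))
    (Gt : Matrix (Fin r) (Fin r) K)
    (hGt : Gt = ∑ M, γt M • Ft M) :
    (∀ I, (Ft I)ᵀ = Ft I) ∧
    Gt = H⁻¹ * G * H⁻¹ ∧
    IsUnit Gt ∧
    ∀ I J, Ft I * Gt⁻¹ * Ft J = Ft J * Gt⁻¹ * Ft I := by
  have hHdet : IsUnit H.det := (isUnit_iff_isUnit_det H).mp hHinv
  have hHinvDet : IsUnit H⁻¹.det := isUnit_nonsing_inv_det H hHdet
  have hHinvSymm : (H⁻¹).IsSymm := by rw [IsSymm, transpose_nonsing_inv, hHsymm]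
  have hFt' : ∀ I, Ft I = ∑ P, (-H⁻¹) I P • (H⁻¹ * F P * H⁻¹) := fun I => by
    rw [hFt, ← Finset.sum_neg_distrib]
    simp only [Matrix.neg_apply, neg_smul]
  have hGtEq : Gt = H⁻¹ * G * H⁻¹ := by
    rw [hGt, funext hFt', sum_smul_sum_smul, hγt, neg_vecMul, vecMul_neg, neg_neg,
      mulVec_vecMul_inv_of_isSymm hHsymm hHdet, hG, Finset.mul_sum, Finset.sum_mul]
    simp only [mul_smul_comm, smul_mul_assoc]
  refine ⟨fun I => ?_, hGtEq, ?_, fun I J => ?_⟩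
  · rw [hFt]
    exact (isSymm_sum fun P _ => (hHinvSymm.mul_mul_self (hsymm P)).smul _).neg.eq
  · rw [hGtEq]
    have hHinvUnit : IsUnit H⁻¹ := isUnit_nonsing_inv_iff.mpr hHinv
    exact (hHinvUnit.mul hGinv).mul hHinvUnit
  · rw [hFt', hFt']
    refine sum_smul_mul_sum_smul_comm (fun P Q => ?_) _ _
    rw [hGtEq, mul_mul_self_mul_inv_mul_mul_self hHinvDet,
      mul_mul_self_mul_inv_mul_mul_self hHinvDet, hwdvv]
end

section
/- Let K be a field, let F_1, …, F_r be symmetric r×r matrices over K, let γ ∈ K^r, and suppose G = Σ_{M=1}^r γ_M F_M is invertible and the generalized WDVV equations F_I·G^{-1}·F_J = F_J·G^{-1}·F_I hold for all I, J. Let A be any invertible r×r matrix over K, and define F̃_I = Σ_{P=1}^r A_{PI} · (Aᵀ·F_P·A) for I = 1, …, r. Then each F̃_I is symmetric, and with weights γ̃ = A^{-1}·γ the matrix G̃ = Σ_{M=1}^r γ̃_M F̃_M = Aᵀ·G·A is invertible and the generalized WDVV equations F̃_I·G̃^{-1}·F̃_J = F̃_J·G̃^{-1}·F̃_I hold for all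 I, J. (This is the algebraic form of the covariance of the generalized WDVV equations under an invertible linear change of the variables a_I.) -/
open Matrix

/-- Algebraic covariance of the generalized WDVV equations under an invertible linear
change of variables: given symmetric `F I` satisfying the WDVV equations with weights
`γ` and invertible combination `G`, and any invertible matrix `A`, the matrices
`F̃ I = ∑ P, A P I • (Aᵀ * F P * A)` are symmetric, the combination
`G̃ = ∑ M, γ̃ M • F̃ M` for `γ̃ = A⁻¹.mulVec γ` equals `Aᵀ * G * A`, is invertible,
and the WDVV equations hold for the `F̃ I`. -/
theorem wdvv_covariance_linear_change
    {K : Type*} [Field K] {r : ℕ}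
    (F : Fin r → Matrix (Fin r) (Fin r) K)
    (hsymm : ∀ I, (F I)ᵀ = F I)
    (γ : Fin r → K)
    (G : Matrix (Fin r) (Fin r) K)
    (hG : G = ∑ M, γ M • F M)
    (hGinv : IsUnit G)
    (hwdvv : ∀ I J, F I * G⁻¹ * F J = F J * G⁻¹ * F I)
    (A : Matrix (Fin r) (Fin r) K) (hAinv : IsUnit A)
    (Ft : Fin r → Matrix (Fin r) (Fin r) K)
    (hFt : ∀ I, Ft I = ∑ P, A P I • (Aᵀ * F P * A))
    (γt : Fin r → K) (hγt : γt = A⁻¹.mulVec γ)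
    (Gt : Matrix (Fin r) (Fin r) K)
    (hGt : Gt = ∑ M, γt M • Ft M) :
    (∀ I, (Ft I)ᵀ = Ft I) ∧
    Gt = Aᵀ * G * A ∧
    IsUnit Gt ∧
    ∀ I J, Ft I * Gt⁻¹ * Ft J = Ft J * Gt⁻¹ * Ft I := by
  have hAinv' : Invertible A := hAinv.invertible
  have hGinv' : Invertible G := hGinv.invertible
  have hsymmFt : ∀ I, (Ft I)ᵀ = Ft I := by
    intro I
    rw [hFt I, transpose_sum]
    refine Finset.sum_congr rfl fun P _ => ?_
    rw [transpose_smul, transpose_mul, transpose_mul, transpose_transpose, hsymm P,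
      mul_assoc]
  have hGtval : Gt = Aᵀ * G * A := by
    have hAA : A.mulVec γt = γ := by
      rw [hγt, mulVec_mulVec, mul_nonsing_inv A (isUnit_iff_isUnit_det A |>.mp hAinv),
        one_mulVec]
    calc Gt = ∑ M, ∑ P, (γt M * A P M) • (Aᵀ * F P * A) := by
          rw [hGt]
          refine Finset.sum_congr rfl fun M _ => ?_
          rw [hFt M, Finset.smul_sum]
          exact Finset.sum_congr rfl fun P _ => by rw [smul_smul, mul_comm]
      _ = ∑ P, (A.mulVec γt) P • (Aᵀ * F P * A) := by
          rw [Finset.sum_comm]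
          refine Finset.sum_congr rfl fun P _ => ?_
          rw [mulVec, dotProduct, Finset.sum_smul]
          exact Finset.sum_congr rfl fun M _ => by rw [mul_comm]
      _ = Aᵀ * G * A := by
          rw [hAA, hG, Finset.mul_sum, Finset.sum_mul]
          exact Finset.sum_congr rfl fun P _ => by
            rw [mul_smul_comm, smul_mul_assoc]
  have hAt : IsUnit Aᵀ := (Matrix.isUnit_iff_isUnit_det _).mpr (by simpa using (Matrix.isUnit_iff_isUnit_det A).mp hAinv)
  have hGtu : IsUnit Gt := by
    rw [hGtval]
    exact (hAt.mul hGinv).mul hAinv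
  refine ⟨hsymmFt, hGtval, hGtu, fun I J => ?_⟩
  have hGti : Gt⁻¹ = A⁻¹ * G⁻¹ * Aᵀ⁻¹ := by
    rw [hGtval, Matrix.mul_inv_rev, Matrix.mul_inv_rev, mul_assoc]
  have key : ∀ P Q : Fin r,
      (Aᵀ * F P * A) * Gt⁻¹ * (Aᵀ * F Q * A) = Aᵀ * (F P * G⁻¹ * F Q) * A := by
    intro P Q
    have hA1 : A * A⁻¹ = 1 := mul_nonsing_inv A (isUnit_iff_isUnit_det A |>.mp hAinv)
    have hA2 : Aᵀ⁻¹ * Aᵀ = 1 := nonsing_inv_mul Aᵀ (isUnit_iff_isUnit_det Aᵀ |>.mp hAt)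
    rw [hGti]
    calc Aᵀ * F P * A * (A⁻¹ * G⁻¹ * Aᵀ⁻¹) * (Aᵀ * F Q * A)
        = Aᵀ * F P * (A * A⁻¹) * G⁻¹ * (Aᵀ⁻¹ * Aᵀ) * F Q * A := by
          simp only [mul_assoc]
      _ = Aᵀ * (F P * G⁻¹ * F Q) * A := by
          rw [hA1, hA2, mul_one]
          simp only [mul_assoc, one_mul]
  have expand : ∀ I J : Fin r, Ft I * Gt⁻¹ * Ft J
      = ∑ P, ∑ Q, (A P I * A Q J) • (Aᵀ * (F P * G⁻¹ * F Q) * A) := by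
    intro I J
    rw [hFt I, hFt J, Finset.sum_mul, Finset.sum_mul]
    refine Finset.sum_congr rfl fun P _ => ?_
    rw [Finset.mul_sum]
    refine Finset.sum_congr rfl fun Q _ => ?_
    rw [smul_mul_assoc, smul_mul_assoc, mul_smul_comm, smul_smul, key]
  rw [expand I J, expand J I, Finset.sum_comm]
  refine Finset.sum_congr rfl fun P _ => Finset.sum_congr rfl fun Q _ => ?_
  rw [hwdvv P Q, mul_comm]
end
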